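/- arXiv:2509.01698 — 2 statements merged into one kernel-verified Lean document; each statement's English description precedes it below -/
import Mathlib

section
/- Let n ≥ 1 and k ≥ 3 be integers, let k_1, …, k_{2n+1} be positive integers, and let G be the clique expansion C_{2n+1}[k_1, …, k_{2n+1}] of the odd cycle C_{2n+1}. Then G is k-colorable if and only if both of the following hold: (i) k_i + k_{i+1} ≤ k for every i (indices taken modulo 2n+1), and (ii) k_1 + k_2 + ⋯ + k_{2n+1} ≤ n·k. -/
open SimpleGraph Finset

/-- The cycle graph on `Fin p` (for `p ≥ 3` this is the cycle `C_p`). -/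
def cycleG (p : ℕ) [NeZero p] : SimpleGraph (Fin p) where
  Adj i j := i ≠ j ∧ (i + 1 = j ∨ j + 1 = i)
  symm := by
    refine ⟨?_⟩
    rintro i j ⟨h, h'⟩
    exact ⟨h.symm, h'.symm⟩
  loopless := by
    refine ⟨?_⟩
    rintro i ⟨h, _⟩
    exact h rfl

/-- The clique expansion `C_p[k 0, …, k (p-1)]` of the cycle `C_p`:
vertices of the cycle are replaced by cliques of the prescribed sizes, and
all edges are added between cyclically consecutive cliques. -/
def cliqueExpansion (p : ℕ) [NeZero p] (k : Fin p → ℕ) : SimpleGraph (Σ i : Fin p, Fin (k i)) where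
  Adj a b := a ≠ b ∧ (a.1 = b.1 ∨ a.1 + 1 = b.1 ∨ b.1 + 1 = a.1)
  symm := by
    refine ⟨?_⟩
    rintro a b ⟨h, h'⟩
    refine ⟨h.symm, ?_⟩
    rcases h' with h' | h' | h'
    · exact Or.inl h'.symm
    · exact Or.inr (Or.inr h')
    · exact Or.inr (Or.inl h')
  loopless := by
    refine ⟨?_⟩
    rintro a ⟨h, _⟩
    exact h rfl

/-- The join `G ⊕ H` of two graphs: disjoint union plus all edges in between. -/
def joinG {α β : Type*} (G : SimpleGraph α) (H : SimpleGraph β) : SimpleGraph (α ⊕ β) where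
  Adj x y :=
    match x, y with
    | Sum.inl a, Sum.inl b => G.Adj a b
    | Sum.inr a, Sum.inr b => H.Adj a b
    | _, _ => True
  symm := by
    refine ⟨?_⟩
    rintro (a | a) (b | b) h
    · exact G.adj_symm h
    · trivial
    · trivial
    · exact H.adj_symm h
  loopless := by
    refine ⟨?_⟩
    rintro (a | a) h
    · exact G.irrefl h
    · exact H.irrefl h

/-- The bull: a triangle with two pendant edges. -/
def bull : SimpleGraph (Fin 5) :=
  SimpleGraph.fromRel (fun a b =>
    (a = 0 ∧ b = 1) ∨ (a = 1 ∧ b = 2) ∨ (a = 2 ∧ b = 3) ∨ (a = 3 ∧ b = 4) ∨ (a = 1 ∧ b = 3))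

/-- The claw `K_{1,3}`. -/
def claw : SimpleGraph (Fin 4) :=
  SimpleGraph.fromRel (fun a b => a = 0 ∧ b ≠ 0)

/-- The chair: the claw with one edge subdivided once. -/
def chair : SimpleGraph (Fin 5) :=
  SimpleGraph.fromRel (fun a b =>
    (a = 0 ∧ b = 1) ∨ (a = 0 ∧ b = 2) ∨ (a = 0 ∧ b = 3) ∨ (a = 3 ∧ b = 4))

/-- `G` contains `H` as a (not necessarily induced) subgraph. -/
def ContainsSub {V W : Type*} (G : SimpleGraph V) (H : SimpleGraph W) : Prop :=
  ∃ f : H →g G, Function.Injective f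

/-- The independence number of a finite graph. -/
noncomputable def indepNum {V : Type*} [Fintype V] (G : SimpleGraph V) : ℕ :=
  sSup {n | ∃ s : Finset V, s.card = n ∧ ∀ a ∈ s, ∀ b ∈ s, a ≠ b → ¬ G.Adj a b}

/-- Clique sizes of the spindle graph `M_{3i+1} = C_{2i+1}[2,1,2,1,…,2,1,1]`. -/
def spindleKs (i : ℕ) : Fin (2 * i + 1) → ℕ :=
  fun j => if j.val % 2 = 0 ∧ j.val < 2 * i then 2 else 1

/-- Clique sizes `[2,…,2,1,3,1,3,1,…,3,1]`: `a` copies of `2`, then a `1`,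
then alternating `3,1`-pairs up to length `p`. -/
def patternKs (p a : ℕ) : Fin p → ℕ :=
  fun j => if j.val < a then 2 else if (j.val - a) % 2 = 0 then 1 else 3

/-!
Two consecutive cliques together form a clique, so `k_i + k_{i+1} ≤ k`; and a colour class
meets each clique at most once and never two consecutive cliques, so it meets at most `n` of
the `2n+1` cliques, whence `∑ k_i ≤ n k`. Conversely, colour clique `i` by a cyclic interval of
`ℤ/k` of length `k_i` starting at `a_i`. Consecutive intervals are disjoint as soon as the gap
`d_i = a_{i+1} - a_i` lies in `[k_i, k - k_{i+1}]`, and the gaps close up around the cycle if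
they sum to `n k`; such gaps exist because `∑ k_i ≤ n k ≤ ∑ (k - k_{i+1})`.
-/

theorem Nat.not_modEq_of_lt_of_lt_add {k x y : ℕ} (hxy : x < y) (hyx : y < x + k) :
    ¬ x ≡ y [MOD k] := fun h ↦ by
  have := Nat.le_of_dvd (by omega) ((Nat.modEq_iff_dvd' hxy.le).mp h)
  omega

theorem Finset.exists_le_le_sum_eq {ι : Type*} (s : Finset ι) {lo hi : ι → ℕ}
    (h : ∀ i ∈ s, lo i ≤ hi i) {T : ℕ} (hlo : ∑ i ∈ s, lo i ≤ T) (hhi : T ≤ ∑ i ∈ s, hi i) :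
    ∃ d : ι → ℕ, (∀ i ∈ s, lo i ≤ d i ∧ d i ≤ hi i) ∧ ∑ i ∈ s, d i = T := by
  classical
  induction s using Finset.induction_on generalizing T with
  | empty => exact ⟨0, by simp, by simp at hhi ⊢; omega⟩
  | insert a s ha ih =>
    rw [sum_insert ha] at hlo hhi
    have hs : ∀ i ∈ s, lo i ≤ hi i := fun i hi ↦ h i (mem_insert_of_mem hi)
    have hloa := h a (mem_insert_self a s)
    have hlohi := sum_le_sum hs
    set x := min (hi a) (T - ∑ i ∈ s, lo i)
    obtain ⟨d, hd, hsum⟩ := ih hs (T := T - x) (by omega) (by omega)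
    refine ⟨Function.update d a x, fun i hi ↦ ?_, ?_⟩
    · rcases mem_insert.mp hi with rfl | hi
      · simp only [Function.update_self]
        omega
      · rw [Function.update_of_ne (ne_of_mem_of_not_mem hi ha)]
        exact hd i hi
    · rw [sum_insert ha, Function.update_self, sum_update_of_notMem ha, hsum]
      omega

theorem Fin.ne_add_one_of_one_lt {p : ℕ} [NeZero p] (hp : 1 < p) (i : Fin p) : i ≠ i + 1 := by
  simp [Fin.one_eq_zero_iff, hp.ne']

theorem Fin.two_mul_card_le_of_forall_add_one_notMem {p : ℕ} [NeZero p] (S : Finset (Fin p))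
    (h : ∀ i ∈ S, i + 1 ∉ S) : 2 * #S ≤ p := by
  have hdisj : Disjoint S (S.map (Equiv.addRight 1).toEmbedding) := by
    simpa [Finset.disjoint_left] using fun i hi hi' ↦ h _ hi' (by simpa using hi)
  calc 2 * #S = #(S ∪ S.map (Equiv.addRight 1).toEmbedding) := by
        rw [card_union_of_disjoint hdisj, card_map]; ring
    _ ≤ p := (card_le_univ _).trans_eq (Fintype.card_fin p)

theorem Fin.partialSum_last {M : Type*} [AddCommMonoid M] {n : ℕ} (f : Fin n → M) :
    partialSum f (last n) = ∑ i, f i := by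
  simp [partialSum, List.take_of_length_le, List.sum_ofFn]

theorem Fin.partialSum_castSucc_add_one_modEq {m k : ℕ} (d : Fin (m + 1) → ℕ)
    (hd : k ∣ ∑ i, d i) (i : Fin (m + 1)) :
    partialSum d (i + 1).castSucc ≡ partialSum d i.castSucc + d i [MOD k] := by
  cases i using Fin.lastCases with
  | last =>
    rw [last_add_one, castSucc_zero, partialSum_zero, ← partialSum_succ, succ_last,
      partialSum_last]
    exact (Nat.modEq_zero_iff_dvd.mpr hd).symm
  | cast j =>
    rw [coeSucc_eq_succ, ← succ_castSucc, partialSum_succ]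

theorem SimpleGraph.Colorable.card_le_mul_of_forall_isIndepSet {V : Type*} [Fintype V]
    {G : SimpleGraph V} {k c : ℕ} (hG : G.Colorable k)
    (h : ∀ s : Finset V, G.IsIndepSet s → #s ≤ c) : Fintype.card V ≤ c * k := by
  classical
  obtain ⟨C⟩ := hG
  have hfiber : ∀ b ∈ univ.image C, #{v ∈ univ | C v = b} ≤ c := fun b _ ↦
    h _ fun v hv w hw _ hvw ↦ C.valid hvw (by simp_all)
  calc Fintype.card V ≤ c * #(univ.image C) := card_le_mul_card_image univ c hfiber
    _ ≤ c * k := Nat.mul_le_mul_left c (by simpa using card_le_univ (univ.image C))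

section CliqueExpansion

variable {p : ℕ} [NeZero p] {ks : Fin p → ℕ} {k : ℕ}

theorem cliqueExpansion_isClique_sigma_pair (i : Fin p) :
    (cliqueExpansion p ks).IsClique
      ↑(({i, i + 1} : Finset (Fin p)).sigma fun j ↦ (univ : Finset (Fin (ks j)))) := by
  rintro ⟨j, v⟩ hj ⟨j', v'⟩ hj' hne
  refine ⟨hne, ?_⟩
  simp only [coe_sigma, Set.mem_sigma_iff, coe_insert, coe_singleton, Set.mem_insert_iff,
    Set.mem_singleton_iff] at hj hj'
  rcases hj.1 with rfl | rfl <;> rcases hj'.1 with rfl | rfl <;> simp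

theorem cliqueExpansion_add_le_of_colorable (hp : 1 < p)
    (h : (cliqueExpansion p ks).Colorable k) (i : Fin p) : ks i + ks (i + 1) ≤ k := by
  simpa [card_sigma, sum_pair (Fin.ne_add_one_of_one_lt hp i)] using
    (cliqueExpansion_isClique_sigma_pair i).card_le_of_colorable h

theorem cliqueExpansion_card_le_of_isIndepSet (hp : 1 < p)
    {s : Finset (Σ i, Fin (ks i))} (hs : (cliqueExpansion p ks).IsIndepSet s) : #s ≤ p / 2 := by
  have hinj : Set.InjOn Sigma.fst (s : Set (Σ i, Fin (ks i))) := fun x hx y hy hxy ↦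
    of_not_not fun hne ↦ hs hx hy hne ⟨hne, Or.inl hxy⟩
  suffices 2 * #(s.image Sigma.fst) ≤ p by
    rw [← card_image_of_injOn hinj]
    omega
  refine Fin.two_mul_card_le_of_forall_add_one_notMem _ fun i hi hi' ↦ ?_
  obtain ⟨x, hx, rfl⟩ := mem_image.mp hi
  obtain ⟨y, hy, hyx⟩ := mem_image.mp hi'
  have hne : x ≠ y := fun h ↦ Fin.ne_add_one_of_one_lt hp x.1 (by rw [← hyx, h])
  exact hs hx hy hne ⟨hne, Or.inr (Or.inl hyx.symm)⟩

theorem cliqueExpansion_sum_le_of_colorable (hp : 1 < p)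
    (h : (cliqueExpansion p ks).Colorable k) : ∑ i, ks i ≤ p / 2 * k := by
  simpa using h.card_le_mul_of_forall_isIndepSet fun s ↦
    cliqueExpansion_card_le_of_isIndepSet hp

/-- Vertex `v` of clique `i` gets colour `a i + v` modulo `k`. -/
theorem cliqueExpansion_colorable_of_modEq (a d : Fin p → ℕ)
    (hd : ∀ i, ks i ≤ d i ∧ d i + ks (i + 1) ≤ k) (ha : ∀ i, a (i + 1) ≡ a i + d i [MOD k]) :
    (cliqueExpansion p ks).Colorable k := by
  have hpos : ∀ x : Σ i, Fin (ks i), 0 < k := fun x ↦ by have := hd x.1; have := x.2.isLt; omega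
  have hsucc : ∀ i (v : Fin (ks i)) (w : Fin (ks (i + 1))), ¬ a i + v ≡ a (i + 1) + w [MOD k] :=
    fun i v w h ↦ by
      have := hd i
      exact Nat.not_modEq_of_lt_of_lt_add (y := a i + d i + w) (by omega) (by omega)
        (h.trans ((ha i).add_right w))
  refine ⟨Coloring.mk (fun x ↦ ⟨(a x.1 + x.2) % k, Nat.mod_lt _ (hpos x)⟩) ?_⟩
  rintro ⟨i, v⟩ ⟨j, w⟩ ⟨hne, hij⟩ hcol
  dsimp only at hij
  have hmod : a i + v ≡ a j + w [MOD k] := congrArg Fin.val hcol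
  rcases hij with rfl | rfl | rfl
  · have hv := v.isLt
    have hw := w.isLt
    have := hd i
    have hvw : (v : ℕ) ≠ w := fun h ↦ hne (by rw [Fin.ext h])
    rcases Nat.lt_or_gt_of_ne hvw with hlt | hlt
    · exact Nat.not_modEq_of_lt_of_lt_add (by omega) (by omega) hmod
    · exact Nat.not_modEq_of_lt_of_lt_add (by omega) (by omega) hmod.symm
  · exact hsucc i v w hmod
  · exact hsucc j w v hmod.symm

end CliqueExpansion

/-- The colouring winds `t` times around `ℤ/k`. -/
theorem cliqueExpansion_colorable_of_le_mul {m k t : ℕ} {ks : Fin (m + 1) → ℕ}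
    (hadj : ∀ i, ks i + ks (i + 1) ≤ k) (hlo : ∑ i, ks i ≤ t * k)
    (hhi : t * k + ∑ i, ks i ≤ (m + 1) * k) : (cliqueExpansion (m + 1) ks).Colorable k := by
  have hshift : ∑ i, ks (i + 1) = ∑ i, ks i := Equiv.sum_comp (Equiv.addRight 1) ks
  have hgap : ∑ i, (k - ks (i + 1)) + ∑ i, ks i = (m + 1) * k := by
    rw [← hshift, ← sum_add_distrib, sum_congr rfl fun i _ ↦ Nat.sub_add_cancel
      ((Nat.le_add_left _ _).trans (hadj i))]
    simp
  obtain ⟨d, hd, hsum⟩ := exists_le_le_sum_eq univ (lo := ks) (hi := fun i ↦ k - ks (i + 1))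
    (fun i _ ↦ Nat.le_sub_of_add_le (hadj i)) hlo (by omega)
  refine cliqueExpansion_colorable_of_modEq (fun i ↦ Fin.partialSum d i.castSucc) d
    (fun i ↦ ?_) (Fin.partialSum_castSucc_add_one_modEq d (hsum ▸ dvd_mul_left k t))
  have := hd i (mem_univ i)
  have := hadj i
  omega

theorem cliqueExpansion_colorable_iff_general (n k : ℕ) (hn : 1 ≤ n)
    (ks : Fin (2 * n + 1) → ℕ) :
    (cliqueExpansion (2 * n + 1) ks).Colorable k ↔
      (∀ i : Fin (2 * n + 1), ks i + ks (i + 1) ≤ k) ∧ (∑ i, ks i ≤ n * k) := by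
  have hp : 1 < 2 * n + 1 := by omega
  have hhalf : (2 * n + 1) / 2 = n := by omega
  refine ⟨fun h ↦ ⟨cliqueExpansion_add_le_of_colorable hp h, ?_⟩, fun ⟨hadj, hsum⟩ ↦ ?_⟩
  · simpa [hhalf] using cliqueExpansion_sum_le_of_colorable hp h
  · exact cliqueExpansion_colorable_of_le_mul hadj hsum (by nlinarith)

/-- For `n ≥ 1`, `k ≥ 3` and positive clique sizes, the clique
expansion `C_{2n+1}[k_1,…,k_{2n+1}]` is `k`-colorable iff consecutive clique sizes
sum to at most `k` and the total of all clique sizes is at most `n·k`. -/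
theorem cliqueExpansion_colorable_iff (n k : ℕ) (hn : 1 ≤ n) (hk : 3 ≤ k)
    (ks : Fin (2 * n + 1) → ℕ) (hks : ∀ i, 1 ≤ ks i) :
    (cliqueExpansion (2 * n + 1) ks).Colorable k ↔
      (∀ i : Fin (2 * n + 1), ks i + ks (i + 1) ≤ k) ∧ (∑ i, ks i ≤ n * k) :=
  cliqueExpansion_colorable_iff_general n k hn ks
end

section
/- Let G be a graph on exactly 10 vertices containing an induced subgraph isomorphic to C̄_7 with vertices v_1, …, v_7 (so v_i and v_j are adjacent in G if and only if j ≢ i ± 1 (mod 7)), and let w_1, w_2, w_3 be the three remaining vertices. If for some index i (modulo 7) the pairs w_1v_i, w_2v_{i+1}, w_3v_{i+2} are all non-edges of G, or the pairs w_1v_i, w_2v_{i+1}, w_3v_{i+4} are all non-edges of G, then G is 5-colorable. -/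
open SimpleGraph Finset

namespace SimpleGraph

variable {V : Type*} {G : SimpleGraph V}

theorem colorable_of_isIndepSet_cover {α : Type*} [Fintype α] (s : α → Set V)
    (hs : ∀ a, G.IsIndepSet (s a)) (hcover : ∀ x, ∃ a, x ∈ s a) :
    G.Colorable (Fintype.card α) := by
  choose col hcol using hcover
  exact (Coloring.mk col fun {x y} hxy hcxy =>
    hs (col x) (hcol x) (hcxy ▸ hcol y) hxy.ne hxy).colorable

theorem isIndepSet_pair {x y : V} (h : ¬G.Adj x y) : G.IsIndepSet {x, y} :=
  Set.pairwise_pair.mpr fun _ => ⟨h, fun h' => h h'.symm⟩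

end SimpleGraph

theorem cycleG_compl_not_adj_add_one {p : ℕ} [NeZero p] (i : Fin p) :
    ¬(cycleG p)ᶜ.Adj i (i + 1) :=
  fun ⟨hne, hnadj⟩ => hnadj ⟨hne, Or.inl rfl⟩

theorem eq_or_mem_range_of_card_eq_add_three {V : Type*} [Fintype V] {n : ℕ}
    (hcard : Fintype.card V = n + 3) (v : Fin n → V) (hvinj : Function.Injective v)
    (w₁ w₂ w₃ : V) (hw : ∀ i, w₁ ≠ v i ∧ w₂ ≠ v i ∧ w₃ ≠ v i)
    (hne : w₁ ≠ w₂ ∧ w₁ ≠ w₃ ∧ w₂ ≠ w₃) (x : V) :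
    x = w₁ ∨ x = w₂ ∨ x = w₃ ∨ x ∈ Set.range v := by
  classical
  by_contra! hx
  obtain ⟨hx₁, hx₂, hx₃, hxv⟩ := hx
  have hcard_le :=
    (insert x (insert w₁ (insert w₂ (insert w₃ (univ.map ⟨v, hvinj⟩))))).card_le_univ
  rw [card_insert_of_notMem, card_insert_of_notMem, card_insert_of_notMem,
    card_insert_of_notMem, card_map, card_univ, Fintype.card_fin] at hcard_le
  · omega
  all_goals simp only [mem_insert, mem_map, mem_univ, true_and, Function.Embedding.coeFn_mk,
    not_or, not_exists]
  · exact fun i h => (hw i).2.2 h.symm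
  · exact ⟨hne.2.2, fun i h => (hw i).2.1 h.symm⟩
  · exact ⟨hne.1, hne.2.1, fun i h => (hw i).1 h.symm⟩
  · exact ⟨hx₁, hx₂, hx₃, fun i h => hxv ⟨i, h⟩⟩

theorem colorable_five_of_nonadj_pairs {V : Type*} {G : SimpleGraph V} {n : ℕ} [NeZero n]
    (v : Fin n → V) (hcons : ∀ j, ¬G.Adj (v j) (v (j + 1))) (w₁ w₂ w₃ : V)
    (hcover : ∀ x, x = w₁ ∨ x = w₂ ∨ x = w₃ ∨ x ∈ Set.range v) (a b c p q : Fin n)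
    (hidx : ∀ j, j = a ∨ j = b ∨ j = c ∨ j = p ∨ j = p + 1 ∨ j = q ∨ j = q + 1)
    (ha : ¬G.Adj w₁ (v a)) (hb : ¬G.Adj w₂ (v b)) (hc : ¬G.Adj w₃ (v c)) :
    G.Colorable 5 := by
  have hs := G.colorable_of_isIndepSet_cover
    ![{w₁, v a}, {w₂, v b}, {w₃, v c}, {v p, v (p + 1)}, {v q, v (q + 1)}]
    (by simp [Fin.forall_fin_succ, isIndepSet_pair, ha, hb, hc, hcons]) ?_
  · simpa using hs
  intro x
  rcases hcover x with rfl | rfl | rfl | ⟨j, rfl⟩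
  · exact ⟨0, by simp⟩
  · exact ⟨1, by simp⟩
  · exact ⟨2, by simp⟩
  rcases hidx j with rfl | rfl | rfl | rfl | rfl | rfl | rfl
  · exact ⟨0, by simp⟩
  · exact ⟨1, by simp⟩
  · exact ⟨2, by simp⟩
  · exact ⟨3, by simp⟩
  · exact ⟨3, by simp⟩
  · exact ⟨4, by simp⟩
  · exact ⟨4, by simp⟩

theorem nonedge_pattern_fiveColorable {V : Type*} [Fintype V] (G : SimpleGraph V)
    (hcard : Fintype.card V = 10)
    (v : Fin 7 → V) (hvinj : Function.Injective v)
    (hv : ∀ i j : Fin 7, G.Adj (v i) (v j) ↔ ((cycleG 7)ᶜ).Adj i j)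
    (w₁ w₂ w₃ : V)
    (hw : ∀ i, w₁ ≠ v i ∧ w₂ ≠ v i ∧ w₃ ≠ v i)
    (hne : w₁ ≠ w₂ ∧ w₁ ≠ w₃ ∧ w₂ ≠ w₃)
    (h : ∃ i : Fin 7,
      (¬ G.Adj w₁ (v i) ∧ ¬ G.Adj w₂ (v (i + 1)) ∧ ¬ G.Adj w₃ (v (i + 2))) ∨
      (¬ G.Adj w₁ (v i) ∧ ¬ G.Adj w₂ (v (i + 1)) ∧ ¬ G.Adj w₃ (v (i + 4)))) :
    G.Colorable 5 := by
  have hcons : ∀ j, ¬G.Adj (v j) (v (j + 1)) := fun j =>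
    (hv j (j + 1)).not.mpr (cycleG_compl_not_adj_add_one j)
  have hcover := eq_or_mem_range_of_card_eq_add_three hcard v hvinj w₁ w₂ w₃ hw hne
  obtain ⟨i, ⟨h₁, h₂, h₃⟩ | ⟨h₁, h₂, h₃⟩⟩ := h
  · exact colorable_five_of_nonadj_pairs v hcons w₁ w₂ w₃ hcover _ _ _ (i + 3) (i + 5)
      (by clear h₁ h₂ h₃; revert i; decide) h₁ h₂ h₃
  · exact colorable_five_of_nonadj_pairs v hcons w₁ w₂ w₃ hcover _ _ _ (i + 2) (i + 5)
      (by clear h₁ h₂ h₃; revert i; decide) h₁ h₂ h₃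
end
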